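/- Let g be the 4-dimensional solvable real Lie algebra with basis e_1,…,e_4 and nonzero brackets [e_2,e_3] = −e_3 and [e_2,e_4] = e_4, and for t ∈ ℝ let K_t be +id on g⁺_t := span(e_2, e_3) and −id on g⁻_t := span(e_1, e_4 + t e_2). Then dim H^2(g;ℝ) = 2 (with basis the classes [e^1∧e^2] and [e^3∧e^4]), and: dim H^{2+}_{K_0}(g;ℝ) = 0, dim H^{2−}_{K_0}(g;ℝ) = 2, while for every t ≠ 0, dim H^{2+}_{K_t}(g;ℝ) = 1 and dim H^{2−}_{K_t}(g;ℝ) = 1. In particular t ↦ dim H^{2+}_{K_t} is lower-semi-continuous and t ↦ dim H^{2−}_{K_t} is upper-semi-continuous along this curve. -/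

import Mathlib

/-! Indices as in the paper (the code counts from 0). A 2-form `α` is closed iff
`α(e₁,e₃) = α(e₁,e₄) = 0`; the forms `e²∧e³ = d e³` and `e²∧e⁴ = -d e⁴` are exact, and every exact
2-form vanishes on the commuting pairs `(e₁,e₂)` and `(e₃,e₄)`. Hence `[α] ↦ (α(e₁,e₂), α(e₃,e₄))`
identifies `H²` with `ℝ²`, with basis `[e¹∧e²]`, `[e³∧e⁴]`.

The conditions on `K_t` force `K_t e₄ = -e₄ - 2t e₂`, so `K_t` acts on the coordinates of `α` by
`α₁₂ ↦ -α₁₂`, `α₁₃ ↦ -α₁₃`, `α₁₄ ↦ α₁₄ + 2t α₁₂`, `α₂₃ ↦ α₂₃`, `α₂₄ ↦ -α₂₄`,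
`α₃₄ ↦ 2t α₂₃ - α₃₄`. A closed `K_t`-invariant form therefore has class `t α₂₃ [e³∧e⁴]`, so
`H^{2+} = span {t [e³∧e⁴]}`, while a closed anti-invariant form has `t α₁₂ = 0`, so `H^{2-}` is all
of `H²` for `t = 0` and `span {[e³∧e⁴]}` otherwise. -/

open scoped BigOperators

noncomputable section ChevalleyEilenberg

variable (g : Type*) [LieRing g] [LieAlgebra ℝ g]

/-- The Chevalley–Eilenberg differential of an alternating `k`-form on a real Lie
algebra, as a function on `(k+1)`-tuples:
`(dα)(x_0,…,x_k) = Σ_{i<j} (−1)^{i+j} α([x_i,x_j], x_0,…,x̂_i,…,x̂_j,…,x_k)`. -/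
def ceD : {k : ℕ} → AlternatingMap ℝ g ℝ (Fin k) → ((Fin (k + 1) → g) → ℝ)
  | 0, _ => 0
  | (k + 1), α => fun x =>
      ∑ i : Fin (k + 2), ∑ j : Fin (k + 2),
        if hij : (i : ℕ) < (j : ℕ) then
          (-1 : ℝ) ^ ((i : ℕ) + (j : ℕ)) *
            α (fun m : Fin (k + 1) =>
                if hm : (m : ℕ) = 0 then ⁅x i, x j⁆
                else
                  x (j.succAbove
                      ((⟨(i : ℕ), by omega⟩ : Fin (k + 1)).succAbove
                        (⟨(m : ℕ) - 1, by omega⟩ : Fin k))))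
        else 0

theorem ceD_zero {k : ℕ} : ceD g (0 : AlternatingMap ℝ g ℝ (Fin k)) = 0 := by
  cases k with
  | zero => rfl
  | succ k => funext x; simp [ceD]

theorem ceD_add {k : ℕ} (α β : AlternatingMap ℝ g ℝ (Fin k)) :
    ceD g (α + β) = ceD g α + ceD g β := by
  cases k with
  | zero => funext x; simp [ceD]
  | succ k =>
    funext x
    simp only [ceD, Pi.add_apply, AlternatingMap.add_apply]
    rw [← Finset.sum_add_distrib]
    refine Finset.sum_congr rfl fun i _ => ?_
    rw [← Finset.sum_add_distrib]
    refine Finset.sum_congr rfl fun j _ => ?_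
    split
    · ring
    · ring

theorem ceD_smul {k : ℕ} (c : ℝ) (α : AlternatingMap ℝ g ℝ (Fin k)) :
    ceD g (c • α) = c • ceD g α := by
  cases k with
  | zero => funext x; simp [ceD]
  | succ k =>
    funext x
    simp only [ceD, Pi.smul_apply, AlternatingMap.smul_apply, smul_eq_mul,
      Finset.mul_sum]
    refine Finset.sum_congr rfl fun i _ => ?_
    refine Finset.sum_congr rfl fun j _ => ?_
    split
    · ring
    · ring

/-- The space of `d`-closed `k`-forms. -/
def Zsub (k : ℕ) : Submodule ℝ (AlternatingMap ℝ g ℝ (Fin k)) where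
  carrier := {α | ceD g α = 0}
  add_mem' := by
    intro a b ha hb
    simp only [Set.mem_setOf_eq] at *
    rw [ceD_add, ha, hb, add_zero]
  zero_mem' := by
    simpa only [Set.mem_setOf_eq] using ceD_zero g
  smul_mem' := by
    intro c a ha
    simp only [Set.mem_setOf_eq] at *
    rw [ceD_smul, ha, smul_zero]

/-- The space of `d`-exact `k`-forms. -/
def Bsub : (k : ℕ) → Submodule ℝ (AlternatingMap ℝ g ℝ (Fin k))
  | 0 => ⊥
  | (k + 1) =>
    { carrier := {α | ∃ β : AlternatingMap ℝ g ℝ (Fin k), ceD g β = ⇑α}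
      add_mem' := by
        rintro a b ⟨βa, hβa⟩ ⟨βb, hβb⟩
        exact ⟨βa + βb, by rw [ceD_add, hβa, hβb]; ext x; simp⟩
      zero_mem' := ⟨0, by rw [ceD_zero]; ext x; simp⟩
      smul_mem' := by
        rintro c a ⟨β, hβ⟩
        exact ⟨c • β, by rw [ceD_smul, hβ]; rfl⟩ }

/-- The `k`-th Lie algebra cohomology `H^k(g;ℝ) = ker d / im d`. -/
abbrev Hcoh (k : ℕ) : Type _ :=
  @HasQuotient.Quotient ↥(Zsub g k) (Submodule ℝ ↥(Zsub g k)) (@Submodule.hasQuotient ℝ ↥(Zsub g k) _ _ _)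
    ((Bsub g k).comap (Zsub g k).subtype)

/-- The cohomology class of a `d`-closed `k`-form. -/
def cls {k : ℕ} (α : AlternatingMap ℝ g ℝ (Fin k)) (hα : ceD g α = 0) : Hcoh g k :=
  Submodule.Quotient.mk (⟨α, hα⟩ : Zsub g k)

/-- The subgroup `H^{k+}_K(g;ℝ)` of classes admitting a `d`-closed `K`-invariant
representative.  (The set of such classes is a linear subspace, so taking its span
does not enlarge it.) -/
def Hplus (K : g →ₗ[ℝ] g) (k : ℕ) : Submodule ℝ (Hcoh g k) :=
  Submodule.span ℝ
    {c | ∃ (α : AlternatingMap ℝ g ℝ (Fin k)) (hα : ceD g α = 0),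
        α.compLinearMap K = α ∧ c = cls g α hα}

/-- The subgroup `H^{k−}_K(g;ℝ)` of classes admitting a `d`-closed
`K`-anti-invariant representative. -/
def Hminus (K : g →ₗ[ℝ] g) (k : ℕ) : Submodule ℝ (Hcoh g k) :=
  Submodule.span ℝ
    {c | ∃ (α : AlternatingMap ℝ g ℝ (Fin k)) (hα : ceD g α = 0),
        α.compLinearMap K = -α ∧ c = cls g α hα}

/-- The wedge product of `k` linear functionals, as an alternating `k`-form. -/
def wedge {k : ℕ} (fs : Fin k → (g →ₗ[ℝ] ℝ)) :
    AlternatingMap ℝ g ℝ (Fin k) :=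
  MultilinearMap.alternatization
    ((MultilinearMap.mkPiAlgebra ℝ (Fin k) ℝ).compLinearMap fs)

end ChevalleyEilenberg

noncomputable section

section Solv

variable (g : Type*) [LieRing g] [LieAlgebra ℝ g] (e : Module.Basis (Fin 4) ℝ g)

/-- `g⁺_t = span(e_2, e_3)` (0-indexed: `e 1, e 2`), independent of `t`. -/
def gP : Submodule ℝ g := Submodule.span ℝ {e 1, e 2}

/-- `g⁻_t = span(e_1, e_4 + t e_2)` (0-indexed: `e 0, e 3 + t • e 1`). -/
def gM (t : ℝ) : Submodule ℝ g := Submodule.span ℝ {e 0, e 3 + t • e 1}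

end Solv

section AlternatingFin2

variable {ι R M N : Type*} [Fintype ι] [CommSemiring R] [AddCommMonoid M] [Module R M]
  [AddCommMonoid N] [Module R N]

theorem AlternatingMap.compLinearMap_apply_vecCons_two {M₂ : Type*} [AddCommMonoid M₂]
    [Module R M₂] (α : M [⋀^Fin 2]→ₗ[R] N) (f : M₂ →ₗ[R] M) (u v : M₂) :
    α.compLinearMap f ![u, v] = α ![f u, f v] := by
  rw [AlternatingMap.compLinearMap_apply]
  congr 1
  funext m
  fin_cases m <;> rfl

theorem AlternatingMap.apply_vecCons_eq_sum (e : Module.Basis ι R M) (α : M [⋀^Fin 2]→ₗ[R] N)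
    (u v : M) : α ![u, v] = ∑ i, ∑ j, (e.repr u i * e.repr v j) • α ![e i, e j] := by
  let B : M →ₗ[R] M →ₗ[R] N := LinearMap.mk₂ R (fun u v => α ![u, v])
    (fun _ _ _ => α.map_vecCons_add _ _ _) (fun _ _ _ => α.map_vecCons_smul _ _ _)
    (fun u _ _ => (α.curryLeft u).map_vecCons_add _ _ _)
    (fun _ u _ => (α.curryLeft u).map_vecCons_smul _ _ _)
  change B u v = _
  conv_lhs => rw [← e.sum_repr u, ← e.sum_repr v]
  simp only [map_sum, map_smul, LinearMap.sum_apply, LinearMap.smul_apply, Finset.smul_sum,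
    smul_smul]
  rw [Finset.sum_comm]
  simp only [mul_comm]
  rfl

theorem AlternatingMap.apply_vecCons_swap {N' : Type*} [AddCommGroup N'] [Module R N']
    (α : M [⋀^Fin 2]→ₗ[R] N') (u v : M) : α ![v, u] = -α ![u, v] := by
  rw [← α.map_swap ![u, v] Fin.zero_ne_one]
  congr 1
  funext m
  fin_cases m <;> rfl

end AlternatingFin2

section AlternatingFin2Basis4

variable {R M : Type*} [CommRing R] [AddCommGroup M] [Module R M] (e : Module.Basis (Fin 4) R M)

theorem AlternatingMap.apply_vecCons_eq_sum_fin_four (α : M [⋀^Fin 2]→ₗ[R] R) (u v : M) :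
    α ![u, v] =
      α ![e 0, e 1] * (e.repr u 0 * e.repr v 1 - e.repr u 1 * e.repr v 0) +
      α ![e 0, e 2] * (e.repr u 0 * e.repr v 2 - e.repr u 2 * e.repr v 0) +
      α ![e 0, e 3] * (e.repr u 0 * e.repr v 3 - e.repr u 3 * e.repr v 0) +
      α ![e 1, e 2] * (e.repr u 1 * e.repr v 2 - e.repr u 2 * e.repr v 1) +
      α ![e 1, e 3] * (e.repr u 1 * e.repr v 3 - e.repr u 3 * e.repr v 1) +
      α ![e 2, e 3] * (e.repr u 2 * e.repr v 3 - e.repr u 3 * e.repr v 2) := by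
  have hswap : ∀ i j : Fin 4, j < i → α ![e i, e j] = -α ![e j, e i] :=
    fun i j _ => α.apply_vecCons_swap (e j) (e i)
  have hdiag : ∀ i : Fin 4, α ![e i, e i] = 0 :=
    fun i => α.map_eq_zero_of_eq _ (by simp) Fin.zero_ne_one
  rw [α.apply_vecCons_eq_sum e]
  simp only [Fin.sum_univ_four, hdiag, smul_eq_mul]
  simp (disch := decide) only [hswap]
  ring

theorem AlternatingMap.ext_fin_four {α β : M [⋀^Fin 2]→ₗ[R] R}
    (h01 : α ![e 0, e 1] = β ![e 0, e 1]) (h02 : α ![e 0, e 2] = β ![e 0, e 2])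
    (h03 : α ![e 0, e 3] = β ![e 0, e 3]) (h12 : α ![e 1, e 2] = β ![e 1, e 2])
    (h13 : α ![e 1, e 3] = β ![e 1, e 3]) (h23 : α ![e 2, e 3] = β ![e 2, e 3]) : α = β := by
  ext x
  rw [show x = ![x 0, x 1] from (FinVec.etaExpand_eq x).symm, α.apply_vecCons_eq_sum_fin_four e,
    β.apply_vecCons_eq_sum_fin_four e, h01, h02, h03, h12, h13, h23]

end AlternatingFin2Basis4

theorem lie_eq_sum {ι R L : Type*} [Fintype ι] [CommRing R] [LieRing L] [LieAlgebra R L]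
    (e : Module.Basis ι R L) (u v : L) :
    ⁅u, v⁆ = ∑ i, ∑ j, (e.repr u i * e.repr v j) • ⁅e i, e j⁆ := by
  conv_lhs => rw [← e.sum_repr u, ← e.sum_repr v]
  simp only [sum_lie, lie_sum, smul_lie, lie_smul, Finset.smul_sum, smul_smul]
  rw [Finset.sum_comm]
  simp only [mul_comm]

section LowDegree

variable {g : Type*} [LieRing g] [LieAlgebra ℝ g]

theorem ceD_one_apply (β : AlternatingMap ℝ g ℝ (Fin 1)) (x : Fin 2 → g) :
    ceD g β x = -β ![⁅x 0, x 1⁆] := by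
  show (∑ i : Fin 2, ∑ j : Fin 2, _) = _
  simp only [Fin.sum_univ_two]
  norm_num
  congr 2
  funext m
  fin_cases m
  rfl

theorem ceD_two_apply (α : AlternatingMap ℝ g ℝ (Fin 2)) (x : Fin 3 → g) :
    ceD g α x = -α ![⁅x 0, x 1⁆, x 2] + α ![⁅x 0, x 2⁆, x 1] - α ![⁅x 1, x 2⁆, x 0] := by
  show (∑ i : Fin 3, ∑ j : Fin 3, _) = _
  simp only [Fin.sum_univ_three]
  norm_num
  rw [sub_eq_add_neg]
  congr 4 <;> funext m <;> fin_cases m <;> rfl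

theorem wedge_one_apply (f : g →ₗ[ℝ] ℝ) (x : Fin 1 → g) : wedge g ![f] x = f (x 0) := by
  simp [wedge, MultilinearMap.alternatization_apply]

theorem wedge_two_apply (f h : g →ₗ[ℝ] ℝ) (x : Fin 2 → g) :
    wedge g ![f, h] x = f (x 0) * h (x 1) - f (x 1) * h (x 0) := by
  have huniv : (Finset.univ : Finset (Equiv.Perm (Fin 2))) = {1, Equiv.swap 0 1} := by decide
  rw [wedge, MultilinearMap.alternatization_apply, huniv, Finset.sum_pair (by decide)]
  simp [Fin.prod_univ_two]
  ring

theorem cls_eq_zero_iff {k : ℕ} {α : AlternatingMap ℝ g ℝ (Fin k)} (hα : ceD g α = 0) :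
    cls g α hα = 0 ↔ α ∈ Bsub g k :=
  Submodule.Quotient.mk_eq_zero _

theorem apply_eq_zero_of_mem_Bsub {α : AlternatingMap ℝ g ℝ (Fin 2)} (hα : α ∈ Bsub g 2)
    {u v : g} (huv : ⁅u, v⁆ = 0) : α ![u, v] = 0 := by
  obtain ⟨β, hβ⟩ := hα
  rw [← hβ, ceD_one_apply]
  change -β ![⁅u, v⁆] = 0
  rw [huv, neg_eq_zero]
  exact β.map_coord_zero 0 rfl

end LowDegree

section Model

variable {g : Type*} [LieRing g] [LieAlgebra ℝ g]

def HasModelBrackets (e : Module.Basis (Fin 4) ℝ g) : Prop :=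
  ∀ i j : Fin 4, i < j → ⁅e i, e j⁆ =
    (if i = 1 ∧ j = 2 then -e 2 else if i = 1 ∧ j = 3 then e 3 else 0)

variable {e : Module.Basis (Fin 4) ℝ g}

theorem HasModelBrackets.repr_lie (hbr : HasModelBrackets e) (u v : g) :
    ⇑(e.repr ⁅u, v⁆) = ![0, 0, e.repr u 2 * e.repr v 1 - e.repr u 1 * e.repr v 2,
      e.repr u 1 * e.repr v 3 - e.repr u 3 * e.repr v 1] := by
  have hskew : ∀ i j : Fin 4, j < i → ⁅e i, e j⁆ = -⁅e j, e i⁆ :=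
    fun _ _ _ => (lie_skew _ _).symm
  rw [lie_eq_sum e]
  simp only [Fin.sum_univ_four, lie_self]
  simp (disch := decide) only [hskew]
  unfold HasModelBrackets at hbr
  simp (disch := decide) only [hbr]
  funext k
  fin_cases k <;> simp <;> ring

theorem HasModelBrackets.ceD_eq_zero_iff (hbr : HasModelBrackets e)
    (α : AlternatingMap ℝ g ℝ (Fin 2)) :
    ceD g α = 0 ↔ α ![e 0, e 2] = 0 ∧ α ![e 0, e 3] = 0 := by
  constructor
  · intro h
    have h2 := congrFun h ![e 0, e 1, e 2]
    have h3 := congrFun h ![e 0, e 1, e 3]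
    -- the expansion is instantiated at brackets only; unrestricted, `simp` would loop on it
    simp [ceD_two_apply, α.apply_vecCons_eq_sum_fin_four e ⁅_, _⁆, hbr.repr_lie] at h2 h3
    exact ⟨by linarith, by linarith⟩
  · rintro ⟨h02, h03⟩
    funext x
    simp [ceD_two_apply, α.apply_vecCons_eq_sum_fin_four e ⁅_, _⁆, hbr.repr_lie, h02, h03]
    ring

theorem HasModelBrackets.ceD_wedge_coord_zero_one (hbr : HasModelBrackets e) :
    ceD g (wedge g ![e.coord 0, e.coord 1]) = 0 :=
  (hbr.ceD_eq_zero_iff _).2 (by simp [wedge_two_apply])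

theorem HasModelBrackets.ceD_wedge_coord_two_three (hbr : HasModelBrackets e) :
    ceD g (wedge g ![e.coord 2, e.coord 3]) = 0 :=
  (hbr.ceD_eq_zero_iff _).2 (by simp [wedge_two_apply])

theorem HasModelBrackets.wedge_coord_one_two_mem_Bsub (hbr : HasModelBrackets e) :
    wedge g ![e.coord 1, e.coord 2] ∈ Bsub g 2 := by
  refine ⟨wedge g ![e.coord 2], funext fun x => ?_⟩
  simp [ceD_one_apply, wedge_one_apply, wedge_two_apply, hbr.repr_lie]
  ring

theorem HasModelBrackets.wedge_coord_one_three_mem_Bsub (hbr : HasModelBrackets e) :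
    wedge g ![e.coord 1, e.coord 3] ∈ Bsub g 2 := by
  refine ⟨-wedge g ![e.coord 3], funext fun x => ?_⟩
  simp [ceD_one_apply, wedge_one_apply, wedge_two_apply, hbr.repr_lie]
  ring

theorem HasModelBrackets.cls_eq (hbr : HasModelBrackets e) (α : AlternatingMap ℝ g ℝ (Fin 2))
    (hα : ceD g α = 0) :
    cls g α hα = α ![e 0, e 1] • cls g _ hbr.ceD_wedge_coord_zero_one
      + α ![e 2, e 3] • cls g _ hbr.ceD_wedge_coord_two_three := by
  obtain ⟨h02, h03⟩ := (hbr.ceD_eq_zero_iff α).1 hα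
  have hdiff : α - (α ![e 0, e 1] • wedge g ![e.coord 0, e.coord 1]
      + α ![e 2, e 3] • wedge g ![e.coord 2, e.coord 3])
      = α ![e 1, e 2] • wedge g ![e.coord 1, e.coord 2]
        + α ![e 1, e 3] • wedge g ![e.coord 1, e.coord 3] := by
    refine AlternatingMap.ext_fin_four e ?_ ?_ ?_ ?_ ?_ ?_ <;> simp [wedge_two_apply, h02, h03]
  have hmem : α - (α ![e 0, e 1] • wedge g ![e.coord 0, e.coord 1]
      + α ![e 2, e 3] • wedge g ![e.coord 2, e.coord 3]) ∈ Bsub g 2 :=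
    hdiff ▸ add_mem (Submodule.smul_mem _ _ hbr.wedge_coord_one_two_mem_Bsub)
      (Submodule.smul_mem _ _ hbr.wedge_coord_one_three_mem_Bsub)
  unfold cls
  rw [← Submodule.Quotient.mk_smul, ← Submodule.Quotient.mk_smul, ← Submodule.Quotient.mk_add,
    Submodule.Quotient.eq]
  exact hmem

theorem HasModelBrackets.linearIndependent_cls (hbr : HasModelBrackets e) :
    LinearIndependent ℝ ![cls g _ hbr.ceD_wedge_coord_zero_one,
      cls g _ hbr.ceD_wedge_coord_two_three] := by
  rw [LinearIndependent.pair_iff]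
  intro a b hab
  set α := a • wedge g ![e.coord 0, e.coord 1] + b • wedge g ![e.coord 2, e.coord 3]
  have hα : ceD g α = 0 := (hbr.ceD_eq_zero_iff α).2 (by simp [α, wedge_two_apply])
  have hcls : cls g α hα = a • cls g _ hbr.ceD_wedge_coord_zero_one
      + b • cls g _ hbr.ceD_wedge_coord_two_three := by
    rw [hbr.cls_eq]
    simp [α, wedge_two_apply]
  have hB : α ∈ Bsub g 2 := (cls_eq_zero_iff hα).1 (hcls.trans hab)
  have h01 : α ![e 0, e 1] = 0 :=
    apply_eq_zero_of_mem_Bsub hB (by simpa using hbr 0 1 (by decide))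
  have h23 : α ![e 2, e 3] = 0 :=
    apply_eq_zero_of_mem_Bsub hB (by simpa using hbr 2 3 (by decide))
  simp [α, wedge_two_apply] at h01 h23
  exact ⟨h01, h23⟩

theorem HasModelBrackets.span_cls_eq_top (hbr : HasModelBrackets e) :
    Submodule.span ℝ {cls g _ hbr.ceD_wedge_coord_zero_one,
      cls g _ hbr.ceD_wedge_coord_two_three} = ⊤ := by
  refine Submodule.eq_top_iff'.2 fun c => ?_
  obtain ⟨⟨α, hα⟩, rfl⟩ := Submodule.Quotient.mk_surjective _ c
  change cls g α hα ∈ _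
  rw [hbr.cls_eq α hα]
  exact add_mem (Submodule.smul_mem _ _ (Submodule.subset_span (by simp)))
    (Submodule.smul_mem _ _ (Submodule.subset_span (by simp)))

theorem HasModelBrackets.finrank_Hcoh_two (hbr : HasModelBrackets e) :
    Module.finrank ℝ (Hcoh g 2) = 2 := by
  have := finrank_span_eq_card hbr.linearIndependent_cls
  rwa [Matrix.range_cons_cons_empty, hbr.span_cls_eq_top, finrank_top, Fintype.card_fin] at this

def dComplexStructure (e : Module.Basis (Fin 4) ℝ g) (t : ℝ) : g →ₗ[ℝ] g :=
  e.constr ℝ ![-e 0, e 1, e 2, -e 3 - (2 * t) • e 1]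

@[simp]
theorem dComplexStructure_apply_basis (t : ℝ) (i : Fin 4) :
    dComplexStructure e t (e i) = ![-e 0, e 1, e 2, -e 3 - (2 * t) • e 1] i :=
  e.constr_basis ℝ _ i

theorem eq_dComplexStructure {t : ℝ} {K : g →ₗ[ℝ] g} (hP : ∀ x ∈ gP g e, K x = x)
    (hM : ∀ x ∈ gM g e t, K x = -x) : K = dComplexStructure e t := by
  have h0 : K (e 0) = -e 0 := hM _ (Submodule.subset_span (by simp))
  have h1 : K (e 1) = e 1 := hP _ (Submodule.subset_span (by simp))
  have h2 : K (e 2) = e 2 := hP _ (Submodule.subset_span (by simp))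
  have h3 : K (e 3 + t • e 1) = -(e 3 + t • e 1) := hM _ (Submodule.subset_span (by simp))
  have h3' : K (e 3) = -e 3 - (2 * t) • e 1 := by
    rw [map_add, map_smul, h1] at h3
    rw [eq_sub_of_add_eq h3]
    module
  refine e.ext fun i => ?_
  fin_cases i <;> simp [h0, h1, h2, h3']

theorem compLinearMap_dComplexStructure_eq_iff (t : ℝ) (α β : AlternatingMap ℝ g ℝ (Fin 2)) :
    α.compLinearMap (dComplexStructure e t) = β ↔
      -α ![e 0, e 1] = β ![e 0, e 1] ∧ -α ![e 0, e 2] = β ![e 0, e 2] ∧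
      α ![e 0, e 3] + 2 * t * α ![e 0, e 1] = β ![e 0, e 3] ∧ α ![e 1, e 2] = β ![e 1, e 2] ∧
      -α ![e 1, e 3] = β ![e 1, e 3] ∧ 2 * t * α ![e 1, e 2] - α ![e 2, e 3] = β ![e 2, e 3] := by
  obtain ⟨c01, c02, c03, c12, c13, c23⟩ :
      (α.compLinearMap (dComplexStructure e t)) ![e 0, e 1] = -α ![e 0, e 1] ∧
      (α.compLinearMap (dComplexStructure e t)) ![e 0, e 2] = -α ![e 0, e 2] ∧
      (α.compLinearMap (dComplexStructure e t)) ![e 0, e 3] =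
        α ![e 0, e 3] + 2 * t * α ![e 0, e 1] ∧
      (α.compLinearMap (dComplexStructure e t)) ![e 1, e 2] = α ![e 1, e 2] ∧
      (α.compLinearMap (dComplexStructure e t)) ![e 1, e 3] = -α ![e 1, e 3] ∧
      (α.compLinearMap (dComplexStructure e t)) ![e 2, e 3] =
        2 * t * α ![e 1, e 2] - α ![e 2, e 3] := by
    simp only [AlternatingMap.compLinearMap_apply_vecCons_two,
      α.apply_vecCons_eq_sum_fin_four e (dComplexStructure e t _)]
    refine ⟨?_, ?_, ?_, ?_, ?_, ?_⟩ <;> simp <;> ring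
  constructor
  · rintro rfl
    exact ⟨c01.symm, c02.symm, c03.symm, c12.symm, c13.symm, c23.symm⟩
  · rintro ⟨h01, h02, h03, h12, h13, h23⟩
    exact AlternatingMap.ext_fin_four e (c01.trans h01) (c02.trans h02) (c03.trans h03)
      (c12.trans h12) (c13.trans h13) (c23.trans h23)

theorem HasModelBrackets.Hplus_dComplexStructure (hbr : HasModelBrackets e) (t : ℝ) :
    Hplus g (dComplexStructure e t) 2 =
      Submodule.span ℝ {t • cls g _ hbr.ceD_wedge_coord_two_three} := by
  apply le_antisymm
  · refine Submodule.span_le.2 ?_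
    rintro _ ⟨α, hα, hinv, rfl⟩
    obtain ⟨h01, -, -, -, -, h23⟩ := (compLinearMap_dComplexStructure_eq_iff t α α).1 hinv
    rw [SetLike.mem_coe, hbr.cls_eq α hα, show α ![e 0, e 1] = 0 by linarith,
      show α ![e 2, e 3] = α ![e 1, e 2] * t by linarith, zero_smul, zero_add, mul_smul]
    exact Submodule.smul_mem _ _ (Submodule.mem_span_singleton_self _)
  · rw [Submodule.span_singleton_le_iff_mem]
    set β := wedge g ![e.coord 1, e.coord 2] + t • wedge g ![e.coord 2, e.coord 3]
    have hβ : ceD g β = 0 := (hbr.ceD_eq_zero_iff β).2 (by simp [β, wedge_two_apply])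
    have hinv : β.compLinearMap (dComplexStructure e t) = β :=
      (compLinearMap_dComplexStructure_eq_iff t β β).2 (by simp [β, wedge_two_apply]; ring)
    have hcls : cls g β hβ = t • cls g _ hbr.ceD_wedge_coord_two_three := by
      rw [hbr.cls_eq]
      simp [β, wedge_two_apply]
    exact hcls ▸ Submodule.subset_span ⟨β, hβ, hinv, rfl⟩

theorem HasModelBrackets.Hminus_dComplexStructure_zero (hbr : HasModelBrackets e) :
    Hminus g (dComplexStructure e 0) 2 = ⊤ := by
  rw [eq_top_iff, ← hbr.span_cls_eq_top, Submodule.span_le]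
  rintro _ (rfl | rfl) <;> exact Submodule.subset_span
    ⟨_, _, (compLinearMap_dComplexStructure_eq_iff 0 _ _).2 (by simp [wedge_two_apply]), rfl⟩

theorem HasModelBrackets.Hminus_dComplexStructure_of_ne_zero (hbr : HasModelBrackets e) {t : ℝ}
    (ht : t ≠ 0) :
    Hminus g (dComplexStructure e t) 2 =
      Submodule.span ℝ {cls g _ hbr.ceD_wedge_coord_two_three} := by
  apply le_antisymm
  · refine Submodule.span_le.2 ?_
    rintro _ ⟨α, hα, hanti, rfl⟩
    obtain ⟨-, -, h03, -, -, -⟩ := (compLinearMap_dComplexStructure_eq_iff t α (-α)).1 hanti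
    obtain ⟨-, hz⟩ := (hbr.ceD_eq_zero_iff α).1 hα
    simp only [AlternatingMap.neg_apply, hz, neg_zero, zero_add, mul_eq_zero, ht, false_or,
      OfNat.ofNat_ne_zero] at h03
    rw [SetLike.mem_coe, hbr.cls_eq α hα, h03, zero_smul, zero_add]
    exact Submodule.smul_mem _ _ (Submodule.mem_span_singleton_self _)
  · rw [Submodule.span_singleton_le_iff_mem]
    exact Submodule.subset_span
      ⟨_, _, (compLinearMap_dComplexStructure_eq_iff t _ _).2 (by simp [wedge_two_apply]), rfl⟩

end Model

section Solv

variable (g : Type*) [LieRing g] [LieAlgebra ℝ g] (e : Module.Basis (Fin 4) ℝ g)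

/-- On the 4-dimensional solvable Lie algebra with
`[e_2,e_3] = −e_3`, `[e_2,e_4] = e_4`, one has `dim H^2(g;ℝ) = 2` (with basis
`[e^1∧e^2]`, `[e^3∧e^4]`), `dim H^{2+}_{K_0} = 0`, `dim H^{2−}_{K_0} = 2`, while
for `t ≠ 0`, `dim H^{2+}_{K_t} = 1 = dim H^{2−}_{K_t}`. -/
theorem solvable_deformation_jump_of_dimensions
    (hbr : ∀ i j : Fin 4, i < j → ⁅e i, e j⁆ =
      (if i = 1 ∧ j = 2 then -e 2 else if i = 1 ∧ j = 3 then e 3 else 0)) :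
    Module.finrank ℝ (Hcoh g 2) = 2 ∧
    (∃ (h12 : ceD g (wedge g ![e.coord 0, e.coord 1]) = 0)
       (h34 : ceD g (wedge g ![e.coord 2, e.coord 3]) = 0),
      LinearIndependent ℝ
        ![cls g (wedge g ![e.coord 0, e.coord 1]) h12,
          cls g (wedge g ![e.coord 2, e.coord 3]) h34] ∧
      Submodule.span ℝ
        {cls g (wedge g ![e.coord 0, e.coord 1]) h12,
         cls g (wedge g ![e.coord 2, e.coord 3]) h34} =
        (⊤ : Submodule ℝ (Hcoh g 2))) ∧
    (∀ K : g →ₗ[ℝ] g, (∀ x ∈ gP g e, K x = x) → (∀ x ∈ gM g e 0, K x = -x) →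
      Module.finrank ℝ (Hplus g K 2) = 0 ∧
      Module.finrank ℝ (Hminus g K 2) = 2) ∧
    (∀ t : ℝ, t ≠ 0 → ∀ K : g →ₗ[ℝ] g,
      (∀ x ∈ gP g e, K x = x) → (∀ x ∈ gM g e t, K x = -x) →
      Module.finrank ℝ (Hplus g K 2) = 1 ∧
      Module.finrank ℝ (Hminus g K 2) = 1) := by
  replace hbr : HasModelBrackets e := hbr
  have hc : cls g _ hbr.ceD_wedge_coord_two_three ≠ 0 := hbr.linearIndependent_cls.ne_zero 1
  refine ⟨hbr.finrank_Hcoh_two, ⟨_, _, hbr.linearIndependent_cls, hbr.span_cls_eq_top⟩,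
    fun K hP hM => ?_, fun t ht K hP hM => ?_⟩
  · obtain rfl := eq_dComplexStructure hP hM
    rw [hbr.Hplus_dComplexStructure, hbr.Hminus_dComplexStructure_zero, zero_smul,
      Submodule.span_zero_singleton, finrank_bot, finrank_top, hbr.finrank_Hcoh_two]
    exact ⟨rfl, rfl⟩
  · obtain rfl := eq_dComplexStructure hP hM
    rw [hbr.Hplus_dComplexStructure, hbr.Hminus_dComplexStructure_of_ne_zero ht,
      finrank_span_singleton (smul_ne_zero ht hc), finrank_span_singleton hc]
    exact ⟨rfl, rfl⟩

end Solv

end
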